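/- Let (E_1,E_2,E_3,...) = (1, 1,2, 1,2,3, 1,2,3,4, ...) (the m-th group consists of 1,2,...,m) and (q_1,q_2,q_3,...) = (2, 3,3, 4,4,4, 5,5,5,5, ...) (the m-th group consists of m copies of m+1), and let x = Σ_{n=1}^∞ E_n/(q_1···q_n). Then x is Q-distribution normal but x is not Q-normal (indeed x is not Q-normal of order 1, since the digit 0 never occurs). -/

import Mathlib

/-- `Q_n^{(k)} = Σ_{j=1}^n 1/(q_j q_{j+1} ⋯ q_{j+k-1})` for a basic sequence `q` (1-indexed). -/
noncomputable def QNkG (q : ℕ → ℕ) (k n : ℕ) : ℝ :=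
  ∑ j ∈ Finset.Icc 1 n, (∏ t ∈ Finset.range k, (q (j + t) : ℝ))⁻¹

/-- `N_n^Q(B, x)`: the number of occurrences of the block `B` starting at a position
no greater than `n` in the `Q`-Cantor series expansion `(E_1, E_2, …)` of `x`. -/
def NQG (E : ℕ → ℕ) (B : List ℕ) (n : ℕ) : ℕ :=
  ((Finset.Icc 1 n).filter fun j => (List.range B.length).map (fun t => E (j + t)) = B).card

/-- A real number whose `Q`-Cantor series digit sequence is `E` is `Q`-normal of order `k`
if for every block `B` of length `k`, `N_n^Q(B,x)/Q_n^{(k)} → 1`. -/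
def QNormalOfOrder (q E : ℕ → ℕ) (k : ℕ) : Prop :=
  ∀ B : List ℕ, B.length = k →
    Filter.Tendsto (fun n => (NQG E B n : ℝ) / QNkG q k n) Filter.atTop (nhds 1)

/-- `Q`-normality: `Q`-normality of order `k` for every `k ≥ 1`. -/
def QNormal (q E : ℕ → ℕ) : Prop := ∀ k : ℕ, 1 ≤ k → QNormalOfOrder q E k

/-- The value `Σ_{n=1}^∞ E_n/(q_1 ⋯ q_n)` of a `Q`-Cantor series with digits `E` (1-indexed). -/
noncomputable def cantorVal (q E : ℕ → ℕ) : ℝ :=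
  ∑' n : ℕ, (E (n + 1) : ℝ) / ∏ m ∈ Finset.range (n + 1), (q (m + 1) : ℝ)

/-- `T_{Q,n}(x) = q_1 ⋯ q_n · x (mod 1)`. -/
noncomputable def TQ (q : ℕ → ℕ) (x : ℝ) (n : ℕ) : ℝ :=
  Int.fract ((∏ m ∈ Finset.range n, (q (m + 1) : ℝ)) * x)

/-- A sequence `u` of real numbers is uniformly distributed mod 1. -/
def UDMod1 (u : ℕ → ℝ) : Prop :=
  ∀ a b : ℝ, 0 ≤ a → a < b → b ≤ 1 →
    Filter.Tendsto
      (fun N => (((Finset.range N).filter fun n =>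
        a ≤ Int.fract (u n) ∧ Int.fract (u n) < b).card : ℝ) / N)
      Filter.atTop (nhds (b - a))

/-- For `n ≥ 1`, the index `m` of the group containing position `n`, i.e. the least `m`
with `n ≤ m(m+1)/2`. -/
noncomputable def mOf (n : ℕ) : ℕ := sInf {m | n ≤ m * (m + 1) / 2}

/-- The digit sequence `(E_1, E_2, …) = (1, 1,2, 1,2,3, 1,2,3,4, …)`:
the `m`-th group consists of `1, 2, …, m`. -/
noncomputable def Edig (n : ℕ) : ℕ := n - (mOf n - 1) * mOf n / 2

/-- The basic sequence `(q_1, q_2, …) = (2, 3,3, 4,4,4, 5,5,5,5, …)`: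
the `m`-th group consists of `m` copies of `m+1`. -/
noncomputable def qSeq (n : ℕ) : ℕ := mOf n + 1

/-!
Write `t_n = Σ_{k ≥ 0} E_{n+k+1} / (q_{n+1} ⋯ q_{n+k+1})`, so that `x = t_0`. Since `E_j < q_j`,
`0 ≤ t_n ≤ 1` and `t_n = (E_{n+1} + t_{n+1}) / q_{n+1}`, hence `q_1 ⋯ q_n x ≡ t_n (mod 1)`; since
`E_j + 1 < q_j` infinitely often, `t_n < 1`, so `T_{Q,n}(x) = t_n`.

At the `k`-th position of the `K`-th group (`0 ≤ k ≤ K`) the recursion gives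
`(K + 2) t_n ∈ [k + 1, k + 2)`, so the `K + 1` values of a group sit one in each cell of the grid
of mesh `1/(K + 2)` and a group changes the discrepancy of any interval `[0, c)` by at most `2`.
As the first `K` groups fill `K(K + 1)/2` positions, the discrepancy of the first `N` terms is
`O(√N)`. Finally no digit is `0`, so `x` is not `Q`-normal of order `1`.
-/

open Finset Filter Topology

noncomputable def tailProd (q : ℕ → ℕ) (n k : ℕ) : ℝ := ∏ m ∈ range k, (q (n + m + 1) : ℝ)

noncomputable def cantorTail (q E : ℕ → ℕ) (n : ℕ) : ℝ :=
  ∑' k, (E (n + k + 1) : ℝ) / tailProd q n (k + 1)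

section CantorTail

variable {q E : ℕ → ℕ}

lemma tailProd_succ (n k : ℕ) :
    tailProd q n (k + 1) = tailProd q n k * q (n + k + 1) :=
  prod_range_succ _ _

lemma tailProd_succ' (n k : ℕ) :
    tailProd q n (k + 1) = q (n + 1) * tailProd q (n + 1) k := by
  rw [tailProd, prod_range_succ', mul_comm]
  simp only [tailProd, add_zero, add_assoc, add_comm 1]

lemma tailProd_pos (hq : ∀ n, 0 < q (n + 1)) (n k : ℕ) : 0 < tailProd q n k :=
  prod_pos fun _ _ => Nat.cast_pos.mpr (hq _)

lemma pos_of_digit_lt (hE : ∀ n, E (n + 1) < q (n + 1)) (n : ℕ) : 0 < q (n + 1) :=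
  (Nat.zero_le _).trans_lt (hE n)

lemma cantorTail_term_nonneg (n k : ℕ) : 0 ≤ (E (n + k + 1) : ℝ) / tailProd q n (k + 1) :=
  div_nonneg (Nat.cast_nonneg _) (prod_nonneg fun _ _ => Nat.cast_nonneg _)

lemma cantorTail_term_le (hE : ∀ n, E (n + 1) < q (n + 1)) (n k : ℕ) :
    (E (n + k + 1) : ℝ) / tailProd q n (k + 1) ≤ 1 / tailProd q n k - 1 / tailProd q n (k + 1) := by
  have hP := tailProd_pos (pos_of_digit_lt hE) n k
  have hEq : (E (n + k + 1) : ℝ) + 1 ≤ q (n + k + 1) := by exact_mod_cast hE (n + k)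
  have hq : (0 : ℝ) < q (n + k + 1) := by linarith [(E (n + k + 1)).cast_nonneg (α := ℝ)]
  rw [tailProd_succ, div_le_iff₀ (by positivity)]
  field_simp
  linarith

lemma sum_range_cantorTail_term_le (hE : ∀ n, E (n + 1) < q (n + 1)) (n K : ℕ) :
    ∑ k ∈ range K, (E (n + k + 1) : ℝ) / tailProd q n (k + 1) ≤ 1 := by
  have hP := tailProd_pos (pos_of_digit_lt hE) n K
  calc _ ≤ ∑ k ∈ range K, (1 / tailProd q n k - 1 / tailProd q n (k + 1)) :=
        sum_le_sum fun k _ => cantorTail_term_le hE n k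
    _ = 1 - 1 / tailProd q n K := by rw [sum_range_sub']; simp [tailProd]
    _ ≤ 1 := by linarith [one_div_pos.mpr hP]

lemma summable_cantorTail_term (hE : ∀ n, E (n + 1) < q (n + 1)) (n : ℕ) :
    Summable fun k => (E (n + k + 1) : ℝ) / tailProd q n (k + 1) :=
  summable_of_sum_range_le (cantorTail_term_nonneg n) (sum_range_cantorTail_term_le hE n)

lemma cantorTail_nonneg (n : ℕ) : 0 ≤ cantorTail q E n :=
  tsum_nonneg (cantorTail_term_nonneg n)

lemma cantorTail_le_one (hE : ∀ n, E (n + 1) < q (n + 1)) (n : ℕ) : cantorTail q E n ≤ 1 :=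
  Real.tsum_le_of_sum_range_le (cantorTail_term_nonneg n) (sum_range_cantorTail_term_le hE n)

lemma cantorTail_eq (hE : ∀ n, E (n + 1) < q (n + 1)) (n : ℕ) :
    cantorTail q E n = (E (n + 1) + cantorTail q E (n + 1)) / q (n + 1) := by
  rw [cantorTail, (summable_cantorTail_term hE n).tsum_eq_zero_add, cantorTail, add_div,
    ← tsum_div_const]
  congr 1
  · simp [tailProd]
  · refine tsum_congr fun k => ?_
    rw [tailProd_succ', div_div, mul_comm, show n + (k + 1) + 1 = n + 1 + k + 1 by ring]

lemma cantorTail_lt_one_of_succ (hE : ∀ n, E (n + 1) < q (n + 1)) {n : ℕ}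
    (h : cantorTail q E (n + 1) < 1) : cantorTail q E n < 1 := by
  have hEq : (E (n + 1) : ℝ) + 1 ≤ q (n + 1) := by exact_mod_cast hE n
  rw [cantorTail_eq hE, div_lt_one (by linarith [(E (n + 1)).cast_nonneg (α := ℝ)])]
  linarith

lemma cantorTail_lt_one_of_small_digit (hE : ∀ n, E (n + 1) < q (n + 1)) {n : ℕ}
    (h : E (n + 1) + 1 < q (n + 1)) : cantorTail q E n < 1 := by
  have hEq : (E (n + 1) : ℝ) + 2 ≤ q (n + 1) := by exact_mod_cast h
  rw [cantorTail_eq hE, div_lt_one (by linarith [(E (n + 1)).cast_nonneg (α := ℝ)])]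
  linarith [cantorTail_le_one hE (n + 1)]

lemma cantorTail_lt_one (hE : ∀ n, E (n + 1) < q (n + 1))
    (hfreq : ∀ n, ∃ j ≥ n, E (j + 1) + 1 < q (j + 1)) (n : ℕ) : cantorTail q E n < 1 := by
  obtain ⟨j, hjn, hj⟩ := hfreq n
  obtain ⟨d, rfl⟩ := Nat.exists_eq_add_of_le hjn
  induction d generalizing n with
  | zero => exact cantorTail_lt_one_of_small_digit hE hj
  | succ d ih =>
    refine cantorTail_lt_one_of_succ hE (ih (n + 1) (by omega) ?_)
    rwa [show n + 1 + d = n + (d + 1) by ring]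

lemma prod_mul_cantorVal (hE : ∀ n, E (n + 1) < q (n + 1)) (n : ℕ) :
    ∃ z : ℤ, (∏ m ∈ range n, (q (m + 1) : ℝ)) * cantorVal q E = z + cantorTail q E n := by
  induction n with
  | zero => exact ⟨0, by simp [cantorVal, cantorTail, tailProd]⟩
  | succ n ih =>
    obtain ⟨z, hz⟩ := ih
    have hq : (q (n + 1) : ℝ) ≠ 0 := by exact_mod_cast (pos_of_digit_lt hE n).ne'
    refine ⟨z * q (n + 1) + E (n + 1), ?_⟩
    rw [prod_range_succ, mul_right_comm, hz, cantorTail_eq hE n]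
    push_cast
    field_simp
    ring

lemma TQ_cantorVal (hE : ∀ n, E (n + 1) < q (n + 1))
    (hfreq : ∀ n, ∃ j ≥ n, E (j + 1) + 1 < q (j + 1)) (n : ℕ) :
    TQ q (cantorVal q E) n = cantorTail q E n := by
  obtain ⟨z, hz⟩ := prod_mul_cantorVal hE n
  rw [TQ, hz, Int.fract_intCast_add, Int.fract_eq_self]
  exact ⟨cantorTail_nonneg n, cantorTail_lt_one hE hfreq n⟩

lemma mul_cantorTail_mem_Ico (hE : ∀ n, E (n + 1) < q (n + 1))
    (hfreq : ∀ n, ∃ j ≥ n, E (j + 1) + 1 < q (j + 1)) (n : ℕ) :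
    q (n + 1) * cantorTail q E n ∈ Set.Ico (E (n + 1) : ℝ) (E (n + 1) + 1) := by
  have hq : (q (n + 1) : ℝ) ≠ 0 := by exact_mod_cast (pos_of_digit_lt hE n).ne'
  rw [cantorTail_eq hE n, mul_div_cancel₀ _ hq]
  exact ⟨by linarith [cantorTail_nonneg (q := q) (E := E) (n + 1)],
    by linarith [cantorTail_lt_one hE hfreq (n + 1)]⟩

end CantorTail

lemma not_QNormalOfOrder_one_of_pos {E : ℕ → ℕ} (hE : ∀ n, 0 < n → 0 < E n) (q : ℕ → ℕ) :
    ¬ QNormalOfOrder q E 1 := by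
  intro h
  have hzero : ∀ n, NQG E [0] n = 0 := fun n => by
    refine card_eq_zero.mpr (filter_eq_empty_iff.mpr fun j hj => ?_)
    simpa using (hE j (mem_Icc.mp hj).1).ne'
  have h0 := h [0] rfl
  simp only [hzero, Nat.cast_zero, zero_div] at h0
  exact zero_ne_one (tendsto_nhds_unique tendsto_const_nhds h0)

def triangular (K : ℕ) : ℕ := K * (K + 1) / 2

lemma two_mul_triangular (K : ℕ) : 2 * triangular K = K * (K + 1) :=
  Nat.mul_div_cancel' (Nat.even_mul_succ_self K).two_dvd

lemma triangular_succ (K : ℕ) : triangular (K + 1) = triangular K + (K + 1) := by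
  have h1 := two_mul_triangular K
  have h2 := two_mul_triangular (K + 1)
  nlinarith

lemma mOf_triangular_add {K k : ℕ} (hk : k ≤ K) : mOf (triangular K + k + 1) = K + 1 := by
  have hmono : Monotone triangular := fun a b h =>
    Nat.div_le_div_right (Nat.mul_le_mul h (by omega))
  refine (Nat.sInf_upward_closed_eq_succ_iff (fun a b hab (ha : _ ≤ triangular a) => ?_) K).mpr
    ⟨?_, ?_⟩
  · exact ha.trans (hmono hab)
  · show _ ≤ triangular (K + 1)
    rw [triangular_succ]
    omega
  · show ¬ _ ≤ triangular K
    omega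

lemma exists_eq_triangular_add {n : ℕ} (hn : 0 < n) :
    ∃ K k, k ≤ K ∧ n = triangular K + k + 1 := by
  induction n with
  | zero => omega
  | succ n ih =>
    rcases Nat.eq_zero_or_pos n with rfl | hn
    · exact ⟨0, 0, le_rfl, rfl⟩
    obtain ⟨K, k, hkK, rfl⟩ := ih hn
    rcases hkK.lt_or_eq with hlt | rfl
    · exact ⟨K, k + 1, hlt, rfl⟩
    · exact ⟨k + 1, 0, by omega, by rw [triangular_succ]; omega⟩

lemma Edig_triangular_add {K k : ℕ} (hk : k ≤ K) : Edig (triangular K + k + 1) = k + 1 := by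
  rw [Edig, mOf_triangular_add hk, Nat.add_sub_cancel, ← triangular]
  omega

lemma qSeq_triangular_add {K k : ℕ} (hk : k ≤ K) : qSeq (triangular K + k + 1) = K + 2 := by
  rw [qSeq, mOf_triangular_add hk]

lemma Edig_pos {n : ℕ} (hn : 0 < n) : 0 < Edig n := by
  obtain ⟨K, k, hk, rfl⟩ := exists_eq_triangular_add hn
  rw [Edig_triangular_add hk]
  exact k.succ_pos

lemma Edig_lt_qSeq (n : ℕ) : Edig (n + 1) < qSeq (n + 1) := by
  obtain ⟨K, k, hk, hn⟩ : ∃ K k, k ≤ K ∧ n + 1 = triangular K + k + 1 :=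
    exists_eq_triangular_add n.zero_lt_succ
  rw [hn, Edig_triangular_add hk, qSeq_triangular_add hk]
  omega

lemma exists_Edig_add_one_lt_qSeq (n : ℕ) : ∃ j ≥ n, Edig (j + 1) + 1 < qSeq (j + 1) := by
  refine ⟨triangular (n + 1), ?_, ?_⟩
  · rw [triangular_succ]
    omega
  · rw [Edig_triangular_add (Nat.zero_le _), qSeq_triangular_add (Nat.zero_le _)]
    omega

lemma abs_sum_indicator_sub_le_two {L : ℕ} {y : ℕ → ℝ} {c : ℝ} (hc0 : 0 ≤ c) (hc1 : c ≤ 1)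
    (hy : ∀ k < L, (k + 1 : ℝ) ≤ (L + 1) * y k ∧ (L + 1) * y k < k + 2) :
    |∑ k ∈ range L, ((if y k < c then 1 else 0) - c)| ≤ 2 := by
  set s := {k ∈ range L | y k < c}
  have hsum : ∑ k ∈ range L, ((if y k < c then (1 : ℝ) else 0) - c) = #s - c * L := by
    rw [sum_sub_distrib, natCast_card_filter, sum_const, card_range, nsmul_eq_mul, mul_comm]
  have hx : 0 ≤ c * (L + 1) := by positivity
  have hupper : s ⊆ range ⌈c * (L + 1)⌉₊ := fun k hk => by
    rw [mem_filter, mem_range] at hk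
    rw [mem_range, Nat.lt_ceil]
    nlinarith [(hy k hk.1).1]
  have hlower : range (⌊c * (L + 1)⌋₊ - 1) ⊆ s := fun k hk => by
    rw [mem_range] at hk
    have hk2 : ((k + 2 : ℕ) : ℝ) ≤ c * (L + 1) := (Nat.le_floor_iff hx).mp (by omega)
    have hfloor : ⌊c * (L + 1)⌋₊ ≤ L + 1 :=
      Nat.floor_le_of_le (by push_cast; nlinarith)
    push_cast at hk2
    refine mem_filter.mpr ⟨mem_range.mpr (by omega), ?_⟩
    nlinarith [(hy k (by omega)).2]
  have hs_le : (#s : ℝ) ≤ c * L + 2 := by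
    have h := Nat.ceil_lt_add_one hx
    have : (#s : ℝ) ≤ ⌈c * (L + 1)⌉₊ := by
      exact_mod_cast (card_le_card hupper).trans_eq (card_range _)
    linarith
  have hs_ge : c * L - 2 ≤ #s := by
    have h := Nat.lt_floor_add_one (c * (L + 1))
    have h' : (⌊c * (L + 1)⌋₊ : ℝ) ≤ #s + 1 := by
      have := card_le_card hlower
      rw [card_range] at this
      exact_mod_cast (by omega : ⌊c * (L + 1)⌋₊ ≤ #s + 1)
    linarith
  rw [hsum, abs_le]
  constructor <;> linarith

section TriangularBlocks

variable {f : ℕ → ℝ} {B : ℝ}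

lemma abs_sum_range_triangular_le
    (hblock : ∀ K, |∑ k ∈ range (K + 1), f (triangular K + k)| ≤ B) (K : ℕ) :
    |∑ n ∈ range (triangular K), f n| ≤ B * K := by
  induction K with
  | zero => simp [triangular]
  | succ K ih =>
    rw [triangular_succ, sum_range_add]
    push_cast
    linarith [abs_add_le (∑ n ∈ range (triangular K), f n)
      (∑ k ∈ range (K + 1), f (triangular K + k)), hblock K]

lemma abs_sum_range_le_of_triangular_blocks (hf : ∀ n, |f n| ≤ 1)
    (hblock : ∀ K, |∑ k ∈ range (K + 1), f (triangular K + k)| ≤ B) {K k : ℕ} (hk : k ≤ K) :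
    |∑ n ∈ range (triangular K + k + 1), f n| ≤ (B + 1) * (K + 1) := by
  have hpartial : |∑ j ∈ range (k + 1), f (triangular K + j)| ≤ K + 1 :=
    calc _ ≤ ∑ j ∈ range (k + 1), |f (triangular K + j)| := abs_sum_le_sum_abs _ _
      _ ≤ ∑ j ∈ range (k + 1), (1 : ℝ) := sum_le_sum fun j _ => hf _
      _ ≤ K + 1 := by simp only [sum_const, card_range, nsmul_one]; exact_mod_cast (by omega)
  have hB : 0 ≤ B := (abs_nonneg _).trans (hblock 0)
  rw [add_assoc, sum_range_add]
  calc _ ≤ _ := abs_add_le _ _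
    _ ≤ B * K + (K + 1) := add_le_add (abs_sum_range_triangular_le hblock K) hpartial
    _ ≤ (B + 1) * (K + 1) := by nlinarith

lemma tendsto_sum_range_div_of_triangular_blocks (hf : ∀ n, |f n| ≤ 1)
    (hblock : ∀ K, |∑ k ∈ range (K + 1), f (triangular K + k)| ≤ B) :
    Tendsto (fun N : ℕ => (∑ n ∈ range N, f n) / N) atTop (𝓝 0) := by
  have hB : 0 ≤ B + 1 := by linarith [(abs_nonneg _).trans (hblock 0)]
  have hlim : Tendsto (fun N : ℕ => (B + 1) * √(3 / N)) atTop (𝓝 0) := by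
    simpa using ((tendsto_const_div_atTop_nhds_zero_nat (3 : ℝ)).sqrt).const_mul (B + 1)
  refine squeeze_zero_norm' ?_ hlim
  filter_upwards [eventually_gt_atTop 0] with N hN
  obtain ⟨K, k, hk, rfl⟩ := exists_eq_triangular_add hN
  -- the group index grows like the square root of the position
  have hsq : ((K : ℝ) + 1) ^ 2 ≤ 3 * (triangular K + k + 1 : ℕ) := by
    have := two_mul_triangular K
    exact_mod_cast (by nlinarith : (K + 1) ^ 2 ≤ 3 * (triangular K + k + 1))
  set N := triangular K + k + 1
  have hN : (0 : ℝ) < N := by positivity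
  have hKN : ((K : ℝ) + 1) / N ≤ √(3 / N) := by
    rw [Real.le_sqrt (by positivity) (by positivity), div_pow, div_le_div_iff₀ (by positivity) hN]
    nlinarith
  rw [norm_div, Real.norm_eq_abs, Real.norm_natCast]
  calc _ ≤ (B + 1) * (K + 1) / N :=
        div_le_div_of_nonneg_right (abs_sum_range_le_of_triangular_blocks hf hblock hk) hN.le
    _ = (B + 1) * ((K + 1) / N) := mul_div_assoc _ _ _
    _ ≤ _ := mul_le_mul_of_nonneg_left hKN hB

end TriangularBlocks

lemma udMod1_of_tendsto_discrepancy {u : ℕ → ℝ}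
    (h : ∀ c, 0 ≤ c → c ≤ 1 → Tendsto (fun N : ℕ =>
      (∑ n ∈ range N, ((if Int.fract (u n) < c then 1 else 0) - c)) / N) atTop (𝓝 0)) :
    UDMod1 u := by
  intro a b ha hab hb
  have hlim := ((h b (ha.trans hab.le) hb).sub (h a ha (hab.le.trans hb))).add_const (b - a)
  rw [sub_zero, zero_add] at hlim
  refine hlim.congr' ?_
  filter_upwards [eventually_gt_atTop 0] with N hN
  have hterm : ∀ n, (if a ≤ Int.fract (u n) ∧ Int.fract (u n) < b then (1 : ℝ) else 0) =
      ((if Int.fract (u n) < b then 1 else 0) - b) - ((if Int.fract (u n) < a then 1 else 0) - a)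
        + (b - a) := by
    intro n
    split_ifs <;> grind
  have hcount : (#{n ∈ range N | a ≤ Int.fract (u n) ∧ Int.fract (u n) < b} : ℝ) =
      ∑ n ∈ range N, ((if Int.fract (u n) < b then 1 else 0) - b)
        - ∑ n ∈ range N, ((if Int.fract (u n) < a then 1 else 0) - a) + (b - a) * N := by
    rw [natCast_card_filter, sum_congr rfl fun n _ => hterm n, sum_add_distrib, sum_sub_distrib,
      sum_const, card_range, nsmul_eq_mul, mul_comm]
  rw [hcount]
  field_simp

lemma mul_cantorTail_triangular_add {K k : ℕ} (hk : k ≤ K) :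
    (k + 1 : ℝ) ≤ (K + 2) * cantorTail qSeq Edig (triangular K + k) ∧
      (K + 2) * cantorTail qSeq Edig (triangular K + k) < k + 2 := by
  have h := mul_cantorTail_mem_Ico Edig_lt_qSeq exists_Edig_add_one_lt_qSeq (triangular K + k)
  rw [Edig_triangular_add hk, qSeq_triangular_add hk] at h
  push_cast at h
  exact ⟨by linarith [h.1], by linarith [h.2]⟩

lemma udMod1_TQ_qSeq : UDMod1 (TQ qSeq (cantorVal qSeq Edig)) := by
  have hfract (n : ℕ) : Int.fract (TQ qSeq (cantorVal qSeq Edig) n) = cantorTail qSeq Edig n := by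
    rw [TQ, Int.fract_fract, ← TQ, TQ_cantorVal Edig_lt_qSeq exists_Edig_add_one_lt_qSeq]
  refine udMod1_of_tendsto_discrepancy fun c hc0 hc1 => ?_
  simp only [hfract]
  refine tendsto_sum_range_div_of_triangular_blocks (B := 2) (fun n => ?_) (fun K => ?_)
  · rw [abs_le]
    split_ifs <;> constructor <;> linarith
  · refine abs_sum_indicator_sub_le_two hc0 hc1 fun k hk => ?_
    push_cast
    rw [show (K : ℝ) + 1 + 1 = K + 2 by ring]
    exact mul_cantorTail_triangular_add (by omega)

/-- For the above `E` and `Q`, the number `x = Σ_{n=1}^∞ E_n/(q_1 ⋯ q_n)` is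
`Q`-distribution normal, but not `Q`-normal; indeed not `Q`-normal of order `1`. -/
theorem stmt10 :
    UDMod1 (TQ qSeq (cantorVal qSeq Edig)) ∧
    ¬ QNormal qSeq Edig ∧
    ¬ QNormalOfOrder qSeq Edig 1 :=
  ⟨udMod1_TQ_qSeq, fun h => not_QNormalOfOrder_one_of_pos (fun _ => Edig_pos) qSeq (h 1 le_rfl),
    not_QNormalOfOrder_one_of_pos (fun _ => Edig_pos) qSeq⟩
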